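/- arXiv:2510.25750 — 5 statements merged into one kernel-verified Lean document; each statement's English description precedes it below -/
import Mathlib

section
/- Let |ψ⟩ and |φ⟩ be unit vectors in a finite-dimensional complex Hilbert space H and let Π be an orthogonal projection on H. Then |√⟨ψ|Π|ψ⟩ − √⟨φ|Π|φ⟩| ≤ (1/√2)·‖|ψ⟩⟨ψ| − |φ⟩⟨φ|‖₁, where ‖·‖₁ is the trace norm. -/
open Matrix

/-- The trace norm of a square complex matrix: the sum of its singular values,
i.e. the sum of the square roots of the eigenvalues of `Aᴴ * A`. -/
noncomputable def traceNorm {m : ℕ} (A : Matrix (Fin m) (Fin m) ℂ) : ℝ :=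
  ∑ i, Real.sqrt ((Matrix.isHermitian_conjTranspose_mul_self A).eigenvalues i)

/-- The rank-one operator `|ψ⟩⟨ψ|` as a matrix. -/
noncomputable def outerProj {m : ℕ} (ψ : Fin m → ℂ) : Matrix (Fin m) (Fin m) ℂ :=
  Matrix.vecMulVec ψ (star ψ)

theorem trace_vmv_mul {m : ℕ} (a b c d : Fin m → ℂ) :
    (Matrix.vecMulVec a b * Matrix.vecMulVec c d).trace = (b ⬝ᵥ c) * (d ⬝ᵥ a) := by
  have : ∀ i, (∑ j, (a i * b j) * (c j * d i)) = (d i * a i) * ∑ j, b j * c j := by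
    intro i
    rw [Finset.mul_sum]
    exact Finset.sum_congr rfl fun j _ => by ring
  simp only [Matrix.trace, Matrix.diag, Matrix.mul_apply, Matrix.vecMulVec_apply]
  rw [Finset.sum_congr rfl fun i _ => this i, ← Finset.sum_mul, mul_comm]
  rfl

theorem sqrt_sum_le {ι : Type*} (s : Finset ι) (f : ι → ℝ) (hf : ∀ i, 0 ≤ f i) :
    Real.sqrt (∑ i ∈ s, f i) ≤ ∑ i ∈ s, Real.sqrt (f i) := by
  classical
  induction s using Finset.induction with
  | empty => simp
  | @insert a s h ih =>
    rw [Finset.sum_insert h, Finset.sum_insert h]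
    refine le_trans ?_ (add_le_add_right ih _)
    have h1 := hf a
    have h2 : 0 ≤ ∑ i ∈ s, f i := Finset.sum_nonneg fun i _ => hf i
    rw [show Real.sqrt (f a) + Real.sqrt (∑ i ∈ s, f i) =
      Real.sqrt ((Real.sqrt (f a) + Real.sqrt (∑ i ∈ s, f i))^2) from
        (Real.sqrt_sq (by positivity)).symm]
    apply Real.sqrt_le_sqrt
    have := Real.sq_sqrt h1
    have := Real.sq_sqrt h2
    nlinarith [Real.sqrt_nonneg (f a), Real.sqrt_nonneg (∑ i ∈ s, f i)]

theorem trace_eq_sum_eig {m : ℕ} {A : Matrix (Fin m) (Fin m) ℂ} (hA : A.IsHermitian) :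
    A.trace = ∑ i, (hA.eigenvalues i : ℂ) := by
  exact hA.trace_eq_sum_eigenvalues

/-- Frobenius norm lower bound on the trace norm. -/
theorem sqrt_trace_le_traceNorm {m : ℕ} (A : Matrix (Fin m) (Fin m) ℂ) :
    Real.sqrt ((Aᴴ * A).trace.re) ≤ traceNorm A := by
  have h := Matrix.isHermitian_conjTranspose_mul_self A
  have htr : (Aᴴ * A).trace.re = ∑ i, h.eigenvalues i := by
    rw [trace_eq_sum_eig h]
    push_cast
    simp
  rw [htr]
  exact sqrt_sum_le _ _ (fun i => Matrix.eigenvalues_conjTranspose_mul_self_nonneg A i)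

theorem key_real_ineq (x y x' y' c : ℝ) (hx0 : 0 ≤ x) (hy0 : 0 ≤ y)
    (hx0' : 0 ≤ x') (hy0' : 0 ≤ y') (hc0 : 0 ≤ c)
    (hx : x^2 + x'^2 = 1) (hy : y^2 + y'^2 = 1) (hc : c ≤ x*y + x'*y') :
    (x - y)^2 ≤ 1 - c^2 := by
  have h1 : (x*y + x'*y')^2 ≤ 1 := by nlinarith [sq_nonneg (x*y' - x'*y)]
  have hs0 : 0 ≤ x*y + x'*y' := le_trans hc0 hc
  have hs1 : x*y + x'*y' ≤ 1 := by nlinarith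
  have h2 : c^2 ≤ (x*y + x'*y')^2 := by nlinarith
  nlinarith [mul_nonneg hx0 hy0]

/-- embedding of plain vectors into Euclidean space -/
noncomputable def eV {m : ℕ} (a : Fin m → ℂ) : EuclideanSpace ℂ (Fin m) :=
  (WithLp.equiv 2 (Fin m → ℂ)).symm a

theorem inner_eV {m : ℕ} (a b : Fin m → ℂ) :
    (inner ℂ (eV a) (eV b) : ℂ) = star a ⬝ᵥ b := by
  simp only [eV, WithLp.equiv_symm_apply]
  rw [EuclideanSpace.inner_toLp_toLp, dotProduct_comm]

theorem norm_eV_sq {m : ℕ} (a : Fin m → ℂ) : ‖eV a‖ ^ 2 = (star a ⬝ᵥ a).re := by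
  rw [← inner_eV a a]
  exact (inner_self_eq_norm_sq (𝕜 := ℂ) (eV a)).symm

theorem abs_dot_le {m : ℕ} (a b : Fin m → ℂ) :
    ‖star a ⬝ᵥ b‖ ≤ ‖eV a‖ * ‖eV b‖ := by
  rw [← inner_eV a b]
  exact norm_inner_le_norm (𝕜 := ℂ) _ _

theorem amplitude_estimate_from_state_estimate {m : ℕ}
    (ψ φ : Fin m → ℂ)
    (hψ : dotProduct (star ψ) ψ = 1) (hφ : dotProduct (star φ) φ = 1)
    (P : Matrix (Fin m) (Fin m) ℂ) (hP : P.IsHermitian) (hP2 : P * P = P) :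
    |Real.sqrt (dotProduct (star ψ) (P.mulVec ψ)).re -
        Real.sqrt (dotProduct (star φ) (P.mulVec φ)).re| ≤
      (1 / Real.sqrt 2) * traceNorm (outerProj ψ - outerProj φ) := by
  classical
  -- adjointness of P
  have hadj : ∀ a w : Fin m → ℂ, star (P *ᵥ a) ⬝ᵥ w = star a ⬝ᵥ (P *ᵥ w) := by
    intro a w
    rw [Matrix.star_mulVec, ← Matrix.dotProduct_mulVec]
    rw [show Pᴴ = P from hP]
  -- orthogonality of range and "kernel" parts
  have horth1 : ∀ a b : Fin m → ℂ, star (P *ᵥ a) ⬝ᵥ (b - P *ᵥ b) = 0 := by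
    intro a b
    rw [hadj, Matrix.mulVec_sub, Matrix.mulVec_mulVec, hP2, sub_self, dotProduct_zero]
  have horth2 : ∀ a b : Fin m → ℂ, star (a - P *ᵥ a) ⬝ᵥ (P *ᵥ b) = 0 := by
    intro a b
    rw [star_sub, sub_dotProduct, hadj, Matrix.mulVec_mulVec, hP2, sub_self]
  set u := P *ᵥ ψ with hu
  set v := P *ᵥ φ with hv
  set ψ' := ψ - u with hψ'
  set φ' := φ - v with hφ'
  -- numerical quantities
  set x := ‖eV u‖ with hxdef
  set y := ‖eV v‖ with hydef
  set x' := ‖eV ψ'‖ with hx'def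
  set y' := ‖eV φ'‖ with hy'def
  set c := ‖star ψ ⬝ᵥ φ‖ with hcdef
  -- the LHS square roots are x and y
  have hpx : (star ψ ⬝ᵥ (P *ᵥ ψ)).re = x ^ 2 := by
    rw [norm_eV_sq, hadj, Matrix.mulVec_mulVec, hP2]
  have hpy : (star φ ⬝ᵥ (P *ᵥ φ)).re = y ^ 2 := by
    rw [norm_eV_sq, hadj, Matrix.mulVec_mulVec, hP2]
  -- Pythagoras
  have hdecomp : ∀ a : Fin m → ℂ, star a ⬝ᵥ a
      = star (P *ᵥ a) ⬝ᵥ (P *ᵥ a) + star (a - P *ᵥ a) ⬝ᵥ (a - P *ᵥ a) := by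
    intro a
    have : a = P *ᵥ a + (a - P *ᵥ a) := by ring
    conv_lhs => rw [this]
    rw [star_add, add_dotProduct, dotProduct_add, dotProduct_add,
      horth1, horth2, add_zero, zero_add]
  have hpyth1 : x ^ 2 + x' ^ 2 = 1 := by
    have := hdecomp ψ
    rw [hψ] at this
    have hre := congrArg Complex.re this
    simp only [Complex.add_re, Complex.one_re] at hre
    rw [hxdef, hx'def, norm_eV_sq, norm_eV_sq]
    exact hre.symm
  have hpyth2 : y ^ 2 + y' ^ 2 = 1 := by
    have := hdecomp φ
    rw [hφ] at this
    have hre := congrArg Complex.re this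
    simp only [Complex.add_re, Complex.one_re] at hre
    rw [hydef, hy'def, norm_eV_sq, norm_eV_sq]
    exact hre.symm
  -- inner product decomposition
  have hinner : star ψ ⬝ᵥ φ = star u ⬝ᵥ v + star ψ' ⬝ᵥ φ' := by
    have h1 : ψ = u + ψ' := by rw [hψ']; ring
    have h2 : φ = v + φ' := by rw [hφ']; ring
    conv_lhs => rw [h1, h2]
    rw [star_add, add_dotProduct, dotProduct_add, dotProduct_add,
      show star u ⬝ᵥ φ' = 0 from horth1 ψ φ, show star ψ' ⬝ᵥ v = 0 from horth2 ψ φ,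
      add_zero, zero_add]
  have hc : c ≤ x * y + x' * y' := by
    rw [hcdef, hinner]
    calc ‖star u ⬝ᵥ v + star ψ' ⬝ᵥ φ'‖
        ≤ ‖star u ⬝ᵥ v‖ + ‖star ψ' ⬝ᵥ φ'‖ := by
          exact norm_add_le _ _
      _ ≤ x * y + x' * y' := add_le_add (abs_dot_le u v) (abs_dot_le ψ' φ')
  have hc0 : (0 : ℝ) ≤ c := norm_nonneg _
  -- key geometric inequality
  have hkey : (x - y)^2 ≤ 1 - c^2 :=
    key_real_ineq x y x' y' c (norm_nonneg _) (norm_nonneg _) (norm_nonneg _)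
      (norm_nonneg _) hc0 hpyth1 hpyth2 hc
  have hc1 : c ≤ 1 := by nlinarith [sq_nonneg (x - y)]
  -- trace computation for the outer projector difference
  set A := outerProj ψ - outerProj φ with hA
  have hAH : Aᴴ = A := by
    rw [hA]
    ext i j
    simp only [outerProj, Matrix.conjTranspose_apply, Matrix.sub_apply,
      Matrix.vecMulVec_apply, star_sub, star_mul', Pi.star_apply, star_star]
    ring
  have htrace : ((Aᴴ * A).trace).re = 2 - 2 * c ^ 2 := by
    rw [hAH, hA]
    have expand : (outerProj ψ - outerProj φ) * (outerProj ψ - outerProj φ)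
        = outerProj ψ * outerProj ψ - outerProj ψ * outerProj φ
          - outerProj φ * outerProj ψ + outerProj φ * outerProj φ := by
      noncomm_ring
    rw [expand]
    rw [Matrix.trace_add, Matrix.trace_sub, Matrix.trace_sub]
    simp only [outerProj, trace_vmv_mul]
    have hconj : star φ ⬝ᵥ ψ = star (star ψ ⬝ᵥ φ) := Matrix.star_dotProduct _ _
    rw [hψ, hφ, hconj]
    have : (star ψ ⬝ᵥ φ) * star (star ψ ⬝ᵥ φ) = (Complex.normSq (star ψ ⬝ᵥ φ) : ℂ) := by
      exact Complex.mul_conj _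
    rw [show star (star ψ ⬝ᵥ φ) * (star ψ ⬝ᵥ φ) = (star ψ ⬝ᵥ φ) * star (star ψ ⬝ᵥ φ) from
      mul_comm _ _, this]
    simp only [mul_one, Complex.sub_re, Complex.add_re, Complex.one_re, Complex.ofReal_re]
    rw [hcdef, Complex.sq_norm]
    ring
  -- lower bound on the trace norm
  have hTN : Real.sqrt (2 - 2 * c ^ 2) ≤ traceNorm A := by
    rw [← htrace]
    exact sqrt_trace_le_traceNorm A
  -- put everything together
  rw [hpx, hpy, Real.sqrt_sq (norm_nonneg _), Real.sqrt_sq (norm_nonneg _)]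
  have habs : |x - y| ≤ Real.sqrt (1 - c ^ 2) := by
    rw [← Real.sqrt_sq_eq_abs]
    exact Real.sqrt_le_sqrt hkey
  have hfinal : Real.sqrt (1 - c ^ 2) ≤ (1 / Real.sqrt 2) * traceNorm A := by
    have h2 : (0:ℝ) < Real.sqrt 2 := Real.sqrt_pos.mpr (by norm_num)
    rw [div_mul_eq_mul_div, one_mul, le_div_iff₀ h2]
    calc Real.sqrt (1 - c ^ 2) * Real.sqrt 2
        = Real.sqrt ((1 - c ^ 2) * 2) := by
          rw [← Real.sqrt_mul (by nlinarith) 2]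
      _ = Real.sqrt (2 - 2 * c ^ 2) := by ring_nf
      _ ≤ traceNorm A := hTN
  calc |x - y| ≤ Real.sqrt (1 - c ^ 2) := habs
    _ ≤ (1 / Real.sqrt 2) * traceNorm A := hfinal
end

section
/- Fix integers d ≥ 2, L ≥ 1, N = (d+1)L. Define for 0 ≤ i ≤ L: x_i = √((N+d−i−1)(N−i+1)/((L+N+d−2i−1)(L+N+d−2i))) and for 1 ≤ i ≤ L: y_i = √((L−i+1)(L+d−i−1)/((L+N+d−2i+1)(L+N+d−2i))). Then x_i² + y_{i+1}² ≤ 1 for all 0 ≤ i ≤ L−1. -/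
lemma x_sq_key (n l t : ℝ) (hn : 2 ≤ n) (hl : 1 ≤ l) (ht : t ≤ l - 1) :
    (((n+1)*l + n - t - 1) * ((n+1)*l - t + 1)) * (l + (n+1)*l + n - 2*t - 2)
      + ((l - t) * (l + n - t - 2)) * (l + (n+1)*l + n - 2*t)
    ≤ (l + (n+1)*l + n - 2*t) * ((l + (n+1)*l + n - 2*t - 1) * (l + (n+1)*l + n - 2*t - 2)) := by
  have ha : (0:ℝ) ≤ n - 2 := by linarith
  have hb : (0:ℝ) ≤ l - 1 := by linarith
  have hs : (0:ℝ) ≤ l - 1 - t := by linarith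
  linarith [mul_nonneg (mul_nonneg (pow_nonneg ha 0) (pow_nonneg hb 0)) (pow_nonneg hs 1),
    mul_nonneg (mul_nonneg (pow_nonneg ha 0) (pow_nonneg hb 0)) (pow_nonneg hs 2),
    mul_nonneg (mul_nonneg (pow_nonneg ha 0) (pow_nonneg hb 0)) (pow_nonneg hs 3),
    mul_nonneg (mul_nonneg (pow_nonneg ha 0) (pow_nonneg hb 1)) (pow_nonneg hs 0),
    mul_nonneg (mul_nonneg (pow_nonneg ha 0) (pow_nonneg hb 1)) (pow_nonneg hs 1),
    mul_nonneg (mul_nonneg (pow_nonneg ha 0) (pow_nonneg hb 1)) (pow_nonneg hs 2),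
    mul_nonneg (mul_nonneg (pow_nonneg ha 0) (pow_nonneg hb 2)) (pow_nonneg hs 0),
    mul_nonneg (mul_nonneg (pow_nonneg ha 0) (pow_nonneg hb 2)) (pow_nonneg hs 1),
    mul_nonneg (mul_nonneg (pow_nonneg ha 1) (pow_nonneg hb 0)) (pow_nonneg hs 0),
    mul_nonneg (mul_nonneg (pow_nonneg ha 1) (pow_nonneg hb 0)) (pow_nonneg hs 1),
    mul_nonneg (mul_nonneg (pow_nonneg ha 1) (pow_nonneg hb 0)) (pow_nonneg hs 2),
    mul_nonneg (mul_nonneg (pow_nonneg ha 1) (pow_nonneg hb 1)) (pow_nonneg hs 0),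
    mul_nonneg (mul_nonneg (pow_nonneg ha 1) (pow_nonneg hb 1)) (pow_nonneg hs 1),
    mul_nonneg (mul_nonneg (pow_nonneg ha 1) (pow_nonneg hb 1)) (pow_nonneg hs 2),
    mul_nonneg (mul_nonneg (pow_nonneg ha 1) (pow_nonneg hb 2)) (pow_nonneg hs 0),
    mul_nonneg (mul_nonneg (pow_nonneg ha 1) (pow_nonneg hb 2)) (pow_nonneg hs 1),
    mul_nonneg (mul_nonneg (pow_nonneg ha 2) (pow_nonneg hb 0)) (pow_nonneg hs 0),
    mul_nonneg (mul_nonneg (pow_nonneg ha 2) (pow_nonneg hb 0)) (pow_nonneg hs 1),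
    mul_nonneg (mul_nonneg (pow_nonneg ha 2) (pow_nonneg hb 1)) (pow_nonneg hs 0),
    mul_nonneg (mul_nonneg (pow_nonneg ha 2) (pow_nonneg hb 1)) (pow_nonneg hs 1),
    mul_nonneg (mul_nonneg (pow_nonneg ha 2) (pow_nonneg hb 2)) (pow_nonneg hs 0),
    mul_nonneg (mul_nonneg (pow_nonneg ha 2) (pow_nonneg hb 2)) (pow_nonneg hs 1),
    mul_nonneg (mul_nonneg (pow_nonneg ha 3) (pow_nonneg hb 0)) (pow_nonneg hs 0),
    mul_nonneg (mul_nonneg (pow_nonneg ha 3) (pow_nonneg hb 1)) (pow_nonneg hs 0),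
    mul_nonneg (mul_nonneg (pow_nonneg ha 3) (pow_nonneg hb 2)) (pow_nonneg hs 0)]

theorem x_sq_add_y_succ_sq_le_one (d L N i : ℕ) (hd : 2 ≤ d) (hL : 1 ≤ L)
    (hN : N = (d + 1) * L) (hi : i ≤ L - 1) :
    Real.sqrt ((((N : ℝ) + d - i - 1) * ((N : ℝ) - i + 1)) /
        (((L : ℝ) + N + d - 2 * i - 1) * ((L : ℝ) + N + d - 2 * i))) ^ 2 +
      Real.sqrt ((((L : ℝ) - i) * ((L : ℝ) + d - i - 2)) /
        (((L : ℝ) + N + d - 2 * i - 1) * ((L : ℝ) + N + d - 2 * i - 2))) ^ 2 ≤ 1 := by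
  have hiL : (i : ℝ) ≤ (L : ℝ) - 1 := by
    have h1 : (i : ℝ) ≤ ((L - 1 : ℕ) : ℝ) := by exact_mod_cast hi
    rwa [Nat.cast_sub hL, Nat.cast_one] at h1
  have hd' : (2 : ℝ) ≤ d := by exact_mod_cast hd
  have hL' : (1 : ℝ) ≤ L := by exact_mod_cast hL
  have hN' : (N : ℝ) = ((d : ℝ) + 1) * L := by
    rw [hN]; push_cast; ring
  have hi0 : (0 : ℝ) ≤ i := Nat.cast_nonneg i
  have hdL : (0 : ℝ) ≤ ((d:ℝ) - 2) * ((L:ℝ) - 1) := by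
    apply mul_nonneg <;> linarith
  have hD2 : (0 : ℝ) < (L : ℝ) + N + d - 2 * i - 2 := by nlinarith
  have hD1 : (0 : ℝ) < (L : ℝ) + N + d - 2 * i - 1 := by linarith
  have hD : (0 : ℝ) < (L : ℝ) + N + d - 2 * i := by linarith
  have hA : (0 : ℝ) ≤ (((N : ℝ) + d - i - 1) * ((N : ℝ) - i + 1)) := by
    apply mul_nonneg <;> nlinarith
  have hB : (0 : ℝ) ≤ (((L : ℝ) - i) * ((L : ℝ) + d - i - 2)) := by
    apply mul_nonneg <;> linarith
  rw [Real.sq_sqrt (div_nonneg hA (le_of_lt (mul_pos hD1 hD))),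
      Real.sq_sqrt (div_nonneg hB (le_of_lt (mul_pos hD1 hD2)))]
  rw [div_add_div _ _ (ne_of_gt (mul_pos hD1 hD)) (ne_of_gt (mul_pos hD1 hD2)),
      div_le_one (mul_pos (mul_pos hD1 hD) (mul_pos hD1 hD2))]
  have key := x_sq_key (d : ℝ) (L : ℝ) (i : ℝ) hd' hL' hiL
  rw [← hN'] at key
  have key2 := mul_le_mul_of_nonneg_left key (le_of_lt hD1)
  nlinarith [key2]
end

section
/- Let d ≥ 2, L ≥ 1 be integers, N = (d+1)L. Then (d−1)·Σ_{i=0}^{L} (L+N+d−2i)·∏_{j=1}^{d−1}(N+j−i)(L+j−i) = ((d−1)/d)·∏_{j=1}^{d}(N+j)(L+j). -/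
lemma tel_aux (a b : ℝ) (d : ℕ) (hd : 1 ≤ d) :
    (d : ℝ) * ((a + b + d) * ∏ j ∈ Finset.range (d - 1), ((a + 1 + j) * (b + 1 + j)))
      = (∏ j ∈ Finset.range d, ((a + 1 + j) * (b + 1 + j)))
        - ∏ j ∈ Finset.range d, ((a + j) * (b + j)) := by
  obtain ⟨k, rfl⟩ : ∃ k, d = k + 1 := ⟨d - 1, (Nat.succ_pred_eq_of_pos hd).symm⟩
  have h1 : ∏ j ∈ Finset.range (k + 1), ((a + 1 + j) * (b + 1 + j))
      = (∏ j ∈ Finset.range k, ((a + 1 + j) * (b + 1 + j))) * ((a + 1 + k) * (b + 1 + k)) :=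
    Finset.prod_range_succ _ _
  have h2 : ∏ j ∈ Finset.range (k + 1), ((a + j) * (b + j))
      = (∏ j ∈ Finset.range k, ((a + 1 + j) * (b + 1 + j))) * (a * b) := by
    rw [Finset.prod_range_succ']
    congr 1
    · exact Finset.prod_congr rfl fun j _ => by push_cast; ring
    · norm_num
  rw [h1, h2]
  simp only [Nat.add_sub_cancel]
  push_cast
  ring

theorem numerator_telescoping_sum (d L N : ℕ) (hd : 2 ≤ d) (hL : 1 ≤ L)
    (hN : N = (d + 1) * L) :
    ((d : ℝ) - 1) *
        ∑ i ∈ Finset.range (L + 1),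
          ((L : ℝ) + N + d - 2 * i) *
            ∏ j ∈ Finset.Icc 1 (d - 1), (((N : ℝ) + j - i) * ((L : ℝ) + j - i)) =
      (((d : ℝ) - 1) / d) * ∏ j ∈ Finset.Icc 1 d, (((N : ℝ) + j) * ((L : ℝ) + j)) := by
  have hd1 : 1 ≤ d := by omega
  set F : ℕ → ℝ := fun i => ∏ j ∈ Finset.range d,
      (((N : ℝ) + 1 - i + j) * ((L : ℝ) + 1 - i + j)) with hF
  set S : ℝ := ∑ i ∈ Finset.range (L + 1),
      ((L : ℝ) + N + d - 2 * i) *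
        ∏ j ∈ Finset.Icc 1 (d - 1), (((N : ℝ) + j - i) * ((L : ℝ) + j - i)) with hS
  have hstep : ∀ i : ℕ,
      (d : ℝ) * (((L : ℝ) + N + d - 2 * i) *
        ∏ j ∈ Finset.Icc 1 (d - 1), (((N : ℝ) + j - i) * ((L : ℝ) + j - i)))
      = F i - F (i + 1) := by
    intro i
    have h1 : ∏ j ∈ Finset.Icc 1 (d - 1), (((N : ℝ) + j - i) * ((L : ℝ) + j - i))
        = ∏ j ∈ Finset.range (d - 1),
            ((((N : ℝ) - i) + 1 + j) * (((L : ℝ) - i) + 1 + j)) := by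
      rw [← Finset.Ico_add_one_right_eq_Icc, Finset.prod_Ico_eq_prod_range]
      exact Finset.prod_congr rfl fun j _ => by push_cast; ring
    have h2 : F i = ∏ j ∈ Finset.range d,
        ((((N : ℝ) - i) + 1 + j) * (((L : ℝ) - i) + 1 + j)) :=
      Finset.prod_congr rfl fun j _ => by push_cast; ring
    have h3 : F (i + 1) = ∏ j ∈ Finset.range d,
        ((((N : ℝ) - i) + j) * (((L : ℝ) - i) + j)) :=
      Finset.prod_congr rfl fun j _ => by push_cast; ring
    rw [h1, h2, h3]
    have := tel_aux ((N : ℝ) - i) ((L : ℝ) - i) d hd1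
    calc (d : ℝ) * (((L : ℝ) + N + d - 2 * i) *
            ∏ j ∈ Finset.range (d - 1), ((((N : ℝ) - i) + 1 + j) * (((L : ℝ) - i) + 1 + j)))
        = (d : ℝ) * (((((N : ℝ) - i) + ((L : ℝ) - i) + d)) *
            ∏ j ∈ Finset.range (d - 1), ((((N : ℝ) - i) + 1 + j) * (((L : ℝ) - i) + 1 + j))) := by
          ring
      _ = _ := this
  have hsum : (d : ℝ) * S = F 0 - F (L + 1) := by
    rw [hS, Finset.mul_sum]
    rw [Finset.sum_congr rfl fun i _ => hstep i]
    exact Finset.sum_range_sub' F (L + 1)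
  have hFL : F (L + 1) = 0 := by
    apply Finset.prod_eq_zero (Finset.mem_range.mpr (by omega : 0 < d))
    push_cast
    ring_nf
  have hF0 : F 0 = ∏ j ∈ Finset.Icc 1 d, (((N : ℝ) + j) * ((L : ℝ) + j)) := by
    rw [← Finset.Ico_add_one_right_eq_Icc, Finset.prod_Ico_eq_prod_range]
    exact Finset.prod_congr rfl fun j _ => by push_cast; ring
  have hdne : (d : ℝ) ≠ 0 := by positivity
  rw [hFL, sub_zero] at hsum
  have hSval : S = F 0 / d := by
    rw [eq_div_iff hdne]
    linear_combination hsum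
  rw [← hF0, hSval]
  field_simp
end

section
/- Let d ≥ 2, L ≥ 1 be integers, N = (d+1)L. With g_{−1} = 0 and g_i = (i+1)(L+N+d−i) for 0 ≤ i ≤ L, we have Σ_{i=0}^{L}(g_i+g_{i−1})(L+N+d−2i)·∏_{j=1}^{d−1}(N+j−i)(L+j−i) = (g_0/d)·∏_{j=1}^{d}(N+j)(L+j) + (2/(d(d+1)))·∏_{j=1}^{d+1}(N+j−1)(L+j−1). -/
lemma shift_prod (a b : ℝ) (k : ℕ) :
    ∏ j ∈ Finset.Icc 1 (k+1), ((a-1+(j:ℝ))*(b-1+(j:ℝ)))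
      = a*b*∏ j ∈ Finset.Icc 1 k, ((a+(j:ℝ))*(b+(j:ℝ))) := by
  induction k with
  | zero => simp
  | succ n ih =>
      rw [Finset.prod_Icc_succ_top (by omega), ih,
        Finset.prod_Icc_succ_top (by omega : 1 ≤ n+1)]
      push_cast; ring

lemma key_tel (a b : ℝ) (k : ℕ) :
    ∏ j ∈ Finset.Icc 1 (k+1), ((a+(j:ℝ))*(b+(j:ℝ)))
      - ∏ j ∈ Finset.Icc 1 (k+1), ((a-1+(j:ℝ))*(b-1+(j:ℝ)))
      = ((k:ℝ)+1)*(a+b+(k:ℝ)+1)*∏ j ∈ Finset.Icc 1 k, ((a+(j:ℝ))*(b+(j:ℝ))) := by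
  rw [shift_prod, Finset.prod_Icc_succ_top (by omega)]
  push_cast; ring

noncomputable def Qf (N L m i : ℕ) : ℝ :=
  ∏ j ∈ Finset.Icc 1 m, (((N : ℝ) + j - i) * ((L : ℝ) + j - i))

lemma Qf_sub (N L m i : ℕ) :
    Qf N L (m+1) i - Qf N L (m+1) (i+1)
      = ((m:ℝ)+1)*((N:ℝ)+L+m+1-2*i)*Qf N L m i := by
  unfold Qf
  rw [show (∏ j ∈ Finset.Icc 1 (m+1), (((N : ℝ) + j - i) * ((L : ℝ) + j - i)))
      = ∏ j ∈ Finset.Icc 1 (m+1), ((((N:ℝ)-i)+(j:ℝ))*(((L:ℝ)-i)+(j:ℝ))) from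
    Finset.prod_congr rfl fun j _ => by ring]
  rw [show (∏ j ∈ Finset.Icc 1 (m+1), (((N : ℝ) + j - ((i+1:ℕ):ℝ)) * ((L : ℝ) + j - ((i+1:ℕ):ℝ))))
      = ∏ j ∈ Finset.Icc 1 (m+1), ((((N:ℝ)-i)-1+(j:ℝ))*(((L:ℝ)-i)-1+(j:ℝ))) from
    Finset.prod_congr rfl fun j _ => by push_cast; ring]
  rw [show (∏ j ∈ Finset.Icc 1 m, (((N : ℝ) + j - i) * ((L : ℝ) + j - i)))
      = ∏ j ∈ Finset.Icc 1 m, ((((N:ℝ)-i)+(j:ℝ))*(((L:ℝ)-i)+(j:ℝ))) from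
    Finset.prod_congr rfl fun j _ => by ring]
  rw [key_tel]; ring

noncomputable def Tf (N L k i : ℕ) : ℝ :=
  ((k:ℝ)+2) * ((2*(i:ℝ)+1)*((L:ℝ)+N+k+1) - 2*(i:ℝ)^2) * Qf N L (k+1) i
    + 2 * Qf N L (k+2) (i+1)

theorem denominator_telescoping_sum (d L N : ℕ) (hd : 2 ≤ d) (hL : 1 ≤ L)
    (hN : N = (d + 1) * L) (g : ℤ → ℝ) (hg0 : g (-1) = 0)
    (hg : ∀ i : ℤ, 0 ≤ i → i ≤ L → g i = ((i : ℝ) + 1) * ((L : ℝ) + N + d - i)) :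
    ∑ i ∈ Finset.range (L + 1),
        (g i + g ((i : ℤ) - 1)) * ((L : ℝ) + N + d - 2 * i) *
          ∏ j ∈ Finset.Icc 1 (d - 1), (((N : ℝ) + j - i) * ((L : ℝ) + j - i)) =
      (g 0 / d) * (∏ j ∈ Finset.Icc 1 d, (((N : ℝ) + j) * ((L : ℝ) + j))) +
        (2 / ((d : ℝ) * (d + 1))) *
          ∏ j ∈ Finset.Icc 1 (d + 1), (((N : ℝ) + j - 1) * ((L : ℝ) + j - 1)) := by
  obtain ⟨k, rfl⟩ : ∃ k, d = k + 1 := ⟨d - 1, by omega⟩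
  have hk : 1 ≤ k := by omega
  have hk1 : ((k:ℝ)+1) ≠ 0 := by positivity
  have hk2 : ((k:ℝ)+2) ≠ 0 := by positivity
  -- value of g i + g (i-1)
  have hc : ∀ i : ℕ, i ≤ L →
      g i + g ((i:ℤ)-1) = (2*(i:ℝ)+1)*((L:ℝ)+N+k+1) - 2*(i:ℝ)^2 := by
    intro i hi
    rcases Nat.eq_zero_or_pos i with h | h
    · subst h
      have h0 := hg 0 le_rfl (by exact_mod_cast Int.ofNat_zero_le L)
      simp only [Int.natCast_zero] at *
      rw [h0]
      simp only [show (0:ℤ) - 1 = -1 from rfl, hg0]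
      push_cast; ring
    · have h1 := hg i (by positivity) (by exact_mod_cast hi)
      have h2 := hg ((i:ℤ)-1) (by omega) (by
        have : (i:ℤ) ≤ L := by exact_mod_cast hi
        omega)
      rw [h1, h2]
      push_cast; ring
  -- zero endpoint products
  have hQL : Qf N L (k+1) (L+1) = 0 := by
    apply Finset.prod_eq_zero (show (1:ℕ) ∈ Finset.Icc 1 (k+1) from
      Finset.mem_Icc.mpr ⟨le_rfl, by omega⟩)
    push_cast; ring
  have hRL : Qf N L (k+2) (L+2) = 0 := by
    apply Finset.prod_eq_zero (show (2:ℕ) ∈ Finset.Icc 1 (k+2) from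
      Finset.mem_Icc.mpr ⟨by omega, by omega⟩)
    push_cast; ring
  have hg0' : g 0 = (L:ℝ)+N+k+1 := by
    have h0 := hg 0 le_rfl (by exact_mod_cast Int.ofNat_zero_le L)
    rw [h0]; push_cast; ring
  have key2 : ∑ i ∈ Finset.range (L+1), (Tf N L k i - Tf N L k (i+1)) / (((k:ℝ)+1)*((k:ℝ)+2)) =
      (g 0 / ((k+1:ℕ):ℝ)) * (∏ j ∈ Finset.Icc 1 (k+1), (((N : ℝ) + j) * ((L : ℝ) + j))) +
        (2 / (((k+1:ℕ):ℝ) * (((k+1:ℕ):ℝ) + 1))) *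
          ∏ j ∈ Finset.Icc 1 (k+1+1), (((N : ℝ) + j - 1) * ((L : ℝ) + j - 1)) := by
    rw [← Finset.sum_div, Finset.sum_range_sub']
    have hq0 : Qf N L (k+1) 0 = ∏ j ∈ Finset.Icc 1 (k+1), (((N : ℝ) + j) * ((L : ℝ) + j)) :=
      Finset.prod_congr rfl fun j _ => by push_cast; ring
    have hq1 : Qf N L (k+2) 1 = ∏ j ∈ Finset.Icc 1 (k+1+1), (((N : ℝ) + j - 1) * ((L : ℝ) + j - 1)) :=
      Finset.prod_congr rfl fun j _ => by push_cast; ring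
    simp only [Tf, hQL, hRL, hq0, hq1, hg0']
    push_cast
    field_simp
    ring
  rw [← key2]
  refine Finset.sum_congr rfl fun i hi => ?_
  have hiL : i ≤ L := by
    have := Finset.mem_range.mp hi; omega
  rw [hc i hiL, eq_div_iff (by positivity : (((k:ℝ)+1)*((k:ℝ)+2)) ≠ 0)]
  have h1 := Qf_sub N L k i
  have h2 := Qf_sub N L (k+1) (i+1)
  simp only [Tf, Qf, Nat.add_sub_cancel] at h1 h2 ⊢
  push_cast at h1 h2 ⊢
  linear_combination
    (-(((k:ℝ)+2)*((2*(i:ℝ)+1)*((L:ℝ)+N+k+1) - 2*(i:ℝ)^2))) * h1 + (-2) * h2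
end

section
/- Let d ≥ 2, L ≥ 1 be integers, N = (d+1)L, and g_i = (i+1)(L+N+d−i) for 0 ≤ i ≤ L with g_{−1} = 0. Then the quotient ( Σ_{i=0}^{L} ((g_i−g_{i−1})²/(L+N+d−2i))·∏_{j=1}^{d−1}(N+j−i)(L+j−i) ) / ( Σ_{i=0}^{L} ((g_i²−g_{i−1}²)/(d−1))·∏_{j=1}^{d−1}(N+j−i)(L+j−i) ) equals (d−1)/(L+N+d + 2NL/(d+1)). -/
noncomputable def ievP (N L d i : ℕ) : ℝ :=
  ∏ j ∈ Finset.Icc 1 (d - 1), (((N : ℝ) + j - i) * ((L : ℝ) + j - i))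

noncomputable def ievA (N L d i : ℕ) : ℝ :=
  ∏ j ∈ Finset.Icc 1 d, (((N : ℝ) + j - i) * ((L : ℝ) + j - i))

lemma ievA_eq (N L d : ℕ) (hd : 1 ≤ d) (i : ℕ) :
    ievA N L d i = (((N : ℝ) + d - i) * ((L : ℝ) + d - i)) * ievP N L d i := by
  obtain ⟨e, rfl⟩ : ∃ e, d = e + 1 := ⟨d - 1, by omega⟩
  unfold ievA ievP
  simp only [Nat.add_sub_cancel]
  rw [Finset.prod_Icc_succ_top (by omega)]
  push_cast
  ring

lemma ievA_succ (N L d : ℕ) (hd : 1 ≤ d) (i : ℕ) :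
    ievA N L d (i + 1) = (((N : ℝ) - i) * ((L : ℝ) - i)) * ievP N L d i := by
  obtain ⟨e, rfl⟩ : ∃ e, d = e + 1 := ⟨d - 1, by omega⟩
  clear hd
  unfold ievA ievP
  simp only [Nat.add_sub_cancel]
  induction e with
  | zero =>
      simp
  | succ k ih =>
      rw [Finset.prod_Icc_succ_top (by omega : 1 ≤ k + 1 + 1), ih]
      conv_rhs => rw [Finset.prod_Icc_succ_top (by omega : 1 ≤ k + 1)]
      push_cast
      ring

lemma ievA_top_zero (N L d : ℕ) (hd : 1 ≤ d) : ievA N L d (L + 1) = 0 := by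
  unfold ievA
  apply Finset.prod_eq_zero (Finset.mem_Icc.mpr ⟨le_refl 1, hd⟩)
  push_cast
  ring

theorem infidelity_exact_value (d L N : ℕ) (hd : 2 ≤ d) (hL : 1 ≤ L)
    (hN : N = (d + 1) * L) (g : ℤ → ℝ) (hg0 : g (-1) = 0)
    (hg : ∀ i : ℤ, 0 ≤ i → i ≤ L → g i = ((i : ℝ) + 1) * ((L : ℝ) + N + d - i)) :
    (∑ i ∈ Finset.range (L + 1),
        (g i - g ((i : ℤ) - 1)) ^ 2 / ((L : ℝ) + N + d - 2 * i) *
          ∏ j ∈ Finset.Icc 1 (d - 1), (((N : ℝ) + j - i) * ((L : ℝ) + j - i))) /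
      (∑ i ∈ Finset.range (L + 1),
        (g i ^ 2 - g ((i : ℤ) - 1) ^ 2) / ((d : ℝ) - 1) *
          ∏ j ∈ Finset.Icc 1 (d - 1), (((N : ℝ) + j - i) * ((L : ℝ) + j - i))) =
      ((d : ℝ) - 1) / ((L : ℝ) + N + d + 2 * N * L / (d + 1)) := by
  have h2d : (2 : ℝ) ≤ (d : ℝ) := by exact_mod_cast hd
  have h1L : (1 : ℝ) ≤ (L : ℝ) := by exact_mod_cast hL
  have hNc : (N : ℝ) = ((d : ℝ) + 1) * L := by rw [hN]; push_cast; ring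
  have hd0 : (d : ℝ) ≠ 0 := by linarith
  have hdm1 : (d : ℝ) - 1 ≠ 0 := by
    have : (0 : ℝ) < (d : ℝ) - 1 := by linarith
    exact this.ne'
  have hdp1 : (d : ℝ) + 1 ≠ 0 := by positivity
  have hd1 : 1 ≤ d := by omega
  have hgi : ∀ i : ℕ, i ≤ L → g i = ((i : ℝ) + 1) * ((L : ℝ) + N + d - i) := by
    intro i hi
    have h := hg i (Int.natCast_nonneg i) (by exact_mod_cast hi)
    push_cast at h
    exact h
  have hgim : ∀ i : ℕ, i ≤ L → g ((i : ℤ) - 1) = (i : ℝ) * ((L : ℝ) + N + d - i + 1) := by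
    intro i hi
    match i with
    | 0 => simp [hg0]
    | (k + 1) =>
        have h1 : ((k + 1 : ℕ) : ℤ) - 1 = (k : ℤ) := by push_cast; ring
        rw [h1, hg k (Int.natCast_nonneg k) (by exact_mod_cast (by omega : k ≤ L))]
        push_cast
        ring
  have hposS : ∀ i : ℕ, i ≤ L → 0 < (L : ℝ) + N + d - 2 * i := by
    intro i hi
    have hiL : (i : ℝ) ≤ L := by exact_mod_cast hi
    nlinarith
  -- numerator
  have hnum : (∑ i ∈ Finset.range (L + 1),
      (g i - g ((i : ℤ) - 1)) ^ 2 / ((L : ℝ) + N + d - 2 * i) *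
        ∏ j ∈ Finset.Icc 1 (d - 1), (((N : ℝ) + j - i) * ((L : ℝ) + j - i))) =
      ievA N L d 0 / d := by
    have hstep : ∀ i ∈ Finset.range (L + 1),
        (g i - g ((i : ℤ) - 1)) ^ 2 / ((L : ℝ) + N + d - 2 * i) *
          (∏ j ∈ Finset.Icc 1 (d - 1), (((N : ℝ) + j - i) * ((L : ℝ) + j - i))) =
        (ievA N L d i - ievA N L d (i + 1)) / d := by
      intro i hi
      have hiL : i ≤ L := by
        have := Finset.mem_range.mp hi; omega
      rw [hgi i hiL, hgim i hiL]
      have hPdef : (∏ j ∈ Finset.Icc 1 (d - 1), (((N : ℝ) + j - i) * ((L : ℝ) + j - i)))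
          = ievP N L d i := rfl
      rw [hPdef, ievA_eq N L d hd1 i, ievA_succ N L d hd1 i]
      have h0 := hposS i hiL
      have hdiff : (((i : ℝ) + 1) * ((L : ℝ) + N + d - i) - (i : ℝ) * ((L : ℝ) + N + d - i + 1))
          = (L : ℝ) + N + d - 2 * i := by ring
      rw [hdiff, sq, mul_div_assoc, div_self h0.ne', mul_one]
      field_simp
      ring
    rw [Finset.sum_congr rfl hstep, ← Finset.sum_div,
      Finset.sum_range_sub' (fun i => ievA N L d i) (L + 1)]
    rw [ievA_top_zero N L d hd1, sub_zero]
  -- denominator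
  set aR : ℝ := (((L : ℝ) + N + d) + 2 * N * L / ((d : ℝ) + 1)) / d with haR
  set f : ℕ → ℝ := fun i =>
    (aR + (2 * ((L : ℝ) + N + d + 1) / ((d : ℝ) + 1)) * (i : ℝ)
        + (-2 / ((d : ℝ) + 1)) * (i : ℝ) ^ 2) * ievA N L d i with hf
  have hden : (∑ i ∈ Finset.range (L + 1),
      (g i ^ 2 - g ((i : ℤ) - 1) ^ 2) / ((d : ℝ) - 1) *
        ∏ j ∈ Finset.Icc 1 (d - 1), (((N : ℝ) + j - i) * ((L : ℝ) + j - i))) =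
      aR * ievA N L d 0 / ((d : ℝ) - 1) := by
    have hstep2 : ∀ i ∈ Finset.range (L + 1),
        (g i ^ 2 - g ((i : ℤ) - 1) ^ 2) / ((d : ℝ) - 1) *
          (∏ j ∈ Finset.Icc 1 (d - 1), (((N : ℝ) + j - i) * ((L : ℝ) + j - i))) =
        (f i - f (i + 1)) / ((d : ℝ) - 1) := by
      intro i hi
      have hiL : i ≤ L := by
        have := Finset.mem_range.mp hi; omega
      rw [hgi i hiL, hgim i hiL]
      have hPdef : (∏ j ∈ Finset.Icc 1 (d - 1), (((N : ℝ) + j - i) * ((L : ℝ) + j - i)))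
          = ievP N L d i := rfl
      rw [hPdef]
      simp only [hf, haR]
      rw [ievA_eq N L d hd1 i, ievA_succ N L d hd1 i]
      push_cast
      field_simp
      ring
    rw [Finset.sum_congr rfl hstep2, ← Finset.sum_div, Finset.sum_range_sub' f (L + 1)]
    have hf0 : f 0 = aR * ievA N L d 0 := by simp [hf]
    have hfL : f (L + 1) = 0 := by simp [hf, ievA_top_zero N L d hd1]
    rw [hf0, hfL, sub_zero]
  have hA0 : 0 < ievA N L d 0 := by
    unfold ievA
    apply Finset.prod_pos
    intro j hj
    have hj1 : (1 : ℝ) ≤ (j : ℝ) := by exact_mod_cast (Finset.mem_Icc.mp hj).1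
    have hN0 : (0 : ℝ) ≤ (N : ℝ) := Nat.cast_nonneg N
    have hL0 : (0 : ℝ) ≤ (L : ℝ) := Nat.cast_nonneg L
    apply mul_pos
    · push_cast; linarith
    · push_cast; linarith
  have hXpos : 0 < (L : ℝ) + N + d + 2 * N * L / ((d : ℝ) + 1) := by
    have h1 : (0 : ℝ) ≤ 2 * N * L / ((d : ℝ) + 1) := by positivity
    have hN0 : (0 : ℝ) ≤ (N : ℝ) := Nat.cast_nonneg N
    linarith
  rw [hnum, hden, haR]
  rw [div_div_div_comm]
  field_simp
end
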